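/- Let G be a graph on n vertices with m edges whose complement G^C is connected. Then ρ_D(G^C) ≥ 2(n−1) + 4m/n. -/

import Mathlib

open SimpleGraph Finset

/-- The transmission of a vertex: sum of distances to all other vertices. -/
noncomputable def transmission {V : Type*} [Fintype V] (G : SimpleGraph V) (u : V) : ℕ :=
  ∑ v, G.dist u v

/-- The transmission σ(G): sum of distances over all unordered pairs. -/
noncomputable def transmissionOf {V : Type*} [Fintype V] (G : SimpleGraph V) : ℝ :=
  (1 / 2) * ∑ u, ∑ v, (G.dist u v : ℝ)

/-- The distance signless Laplacian matrix Q_D(G) = Tr(G) + 𝒟(G). -/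
noncomputable def distSignlessLaplacian {V : Type*} [Fintype V] [DecidableEq V]
    (G : SimpleGraph V) : Matrix V V ℝ :=
  fun u v => (if u = v then (transmission G u : ℝ) else 0) + (G.dist u v : ℝ)

/-- `ρ` is the distance signless Laplacian spectral radius of `G`,
i.e. the largest eigenvalue of `Q_D(G)`. -/
noncomputable def IsDistSLSpectralRadius {V : Type*} [Fintype V] [DecidableEq V]
    (G : SimpleGraph V) (ρ : ℝ) : Prop :=
  IsGreatest {μ : ℝ | Module.End.HasEigenvalue (Matrix.toLin' (distSignlessLaplacian G)) μ} ρ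

/-- Join of two graphs. -/
def joinGraph {α β : Type*} (G : SimpleGraph α) (H : SimpleGraph β) : SimpleGraph (α ⊕ β) :=
  SimpleGraph.fromRel (fun x y =>
    match x, y with
    | Sum.inl a, Sum.inl b => G.Adj a b
    | Sum.inr a, Sum.inr b => H.Adj a b
    | Sum.inl _, Sum.inr _ => True
    | Sum.inr _, Sum.inl _ => False)

/-- The graph H_{t,n-t}. -/
def HGraph (n t : ℕ) : SimpleGraph (Fin n ⊕ Fin n) :=
  SimpleGraph.fromRel (fun x y =>
    match x, y with
    | Sum.inl i, Sum.inr j => (j : ℕ) < n - t ∨ (i : ℕ) < t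
    | _, _ => False)

/-- Hamilton-connected. -/
def IsHamiltonianConnected {V : Type*} [DecidableEq V] (G : SimpleGraph V) : Prop :=
  ∀ u v : V, u ≠ v → ∃ p : G.Walk u v, p.IsHamiltonian

/-- Traceable from every vertex. -/
def TraceableFromEveryVertex {V : Type*} [DecidableEq V] (G : SimpleGraph V) : Prop :=
  ∀ u : V, ∃ v : V, ∃ p : G.Walk u v, p.IsHamiltonian

/-- K_{n-1} + e : complete graph on n-1 vertices with a pendant edge. -/
def KPlusPendant (n : ℕ) : SimpleGraph (Fin (n - 1) ⊕ Fin 1) :=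
  SimpleGraph.fromRel (fun x y =>
    match x, y with
    | Sum.inl a, Sum.inl b => a ≠ b
    | Sum.inl a, Sum.inr _ => (a : ℕ) = 0
    | _, _ => False)

/-! Test the Rayleigh quotient of `Q_D(Gᶜ)` at the all-ones vector: `1ᵀ Q_D(Gᶜ) 1 = 4 W(Gᶜ)`,
where `W = transmissionOf` is the Wiener index, so `n ρ ≥ 4 W(Gᶜ)`. Distinct vertices are at
distance at least `1` in `Gᶜ`, and the `m` pairs adjacent in `G` at distance at least `2`, so
`W(Gᶜ) ≥ n(n-1)/2 + m`. -/

open Matrix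

theorem Matrix.IsHermitian.dotProduct_mulVec_le_mul_dotProduct {n : Type*} [Fintype n]
    [DecidableEq n] {A : Matrix n n ℝ} (hA : A.IsHermitian) {ρ : ℝ}
    (hρ : ρ ∈ upperBounds {μ | Module.End.HasEigenvalue (toLin' A) μ}) (x : n → ℝ) :
    x ⬝ᵥ (A *ᵥ x) ≤ ρ * (x ⬝ᵥ x) := by
  have hpsd : (algebraMap ℝ _ ρ - A).PosSemidef := by
    refine posSemidef_iff_isHermitian_and_spectrum_nonneg.mpr ⟨?_, ?_⟩
    · simpa [IsHermitian, conjTranspose_sub, Algebra.algebraMap_eq_smul_one] using hA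
    · rw [← spectrum.singleton_sub_eq]
      rintro _ ⟨_, rfl, μ, hμ, rfl⟩
      rw [← spectrum_toLin', ← Module.End.hasEigenvalue_iff_mem_spectrum] at hμ
      exact sub_nonneg.mpr (hρ hμ)
  have := hpsd.dotProduct_mulVec_nonneg x
  simp only [star_trivial, sub_mulVec, dotProduct_sub, Algebra.algebraMap_eq_smul_one,
    smul_mulVec, one_mulVec, dotProduct_smul, smul_eq_mul] at this
  linarith

-- The diagonal term sits on the right so that the bound holds in `ℕ` without subtraction.
theorem one_add_ite_adj_le_dist_compl_add_ite_eq {V : Type*} [DecidableEq V]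
    (G : SimpleGraph V) [DecidableRel G.Adj] (hconn : Gᶜ.Connected) (u v : V) :
    1 + (if G.Adj u v then 1 else 0) ≤ Gᶜ.dist u v + (if u = v then 1 else 0) := by
  by_cases huv : u = v
  · subst huv
    simp
  by_cases hadj : G.Adj u v
  · have := hconn.one_lt_dist_of_ne_of_not_adj huv fun h ↦ h.2 hadj
    simp only [hadj, huv, if_true, if_false]
    omega
  · have := hconn.pos_dist_of_ne huv
    simp only [hadj, huv, if_false]
    omega

section

variable {V : Type*} [Fintype V]

theorem sum_ite_adj_eq_two_mul_card_edgeFinset (G : SimpleGraph V) [DecidableRel G.Adj] :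
    ∑ u, ∑ v, (if G.Adj u v then 1 else 0) = 2 * #G.edgeFinset := by
  rw [← G.sum_degrees_eq_twice_card_edges]
  simp [sum_boole, ← G.card_neighborFinset_eq_degree, G.neighborFinset_eq_filter]

theorem card_mul_card_sub_one_div_two_add_card_edgeFinset_le_transmissionOf_compl
    [DecidableEq V] (G : SimpleGraph V) [DecidableRel G.Adj] (hconn : Gᶜ.Connected) :
    (Fintype.card V * (Fintype.card V - 1) : ℝ) / 2 + #G.edgeFinset ≤ transmissionOf Gᶜ := by
  have hsum : Fintype.card V * Fintype.card V + 2 * #G.edgeFinset ≤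
      ∑ u, ∑ v, Gᶜ.dist u v + Fintype.card V :=
    calc Fintype.card V * Fintype.card V + 2 * #G.edgeFinset
        = ∑ u : V, ∑ v : V, (1 + if G.Adj u v then 1 else 0) := by
          simp only [sum_add_distrib, sum_ite_adj_eq_two_mul_card_edgeFinset]
          simp
      _ ≤ ∑ u, ∑ v, (Gᶜ.dist u v + if u = v then 1 else 0) :=
          sum_le_sum fun u _ ↦ sum_le_sum fun v _ ↦
            one_add_ite_adj_le_dist_compl_add_ite_eq G hconn u v
      _ = ∑ u, ∑ v, Gᶜ.dist u v + Fintype.card V := by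
          simp [sum_add_distrib]
  have hsumR : (Fintype.card V * Fintype.card V + 2 * #G.edgeFinset : ℝ) ≤
      ∑ u, ∑ v, (Gᶜ.dist u v : ℝ) + Fintype.card V := by
    exact_mod_cast hsum
  rw [transmissionOf]
  linarith

variable [DecidableEq V]

theorem distSignlessLaplacian_isHermitian (G : SimpleGraph V) :
    (distSignlessLaplacian G).IsHermitian := by
  ext u v
  by_cases huv : u = v
  · subst huv
    simp
  · simp [distSignlessLaplacian, huv, Ne.symm huv, SimpleGraph.dist_comm]

theorem one_dotProduct_distSignlessLaplacian_mulVec_one (G : SimpleGraph V) :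
    1 ⬝ᵥ (distSignlessLaplacian G *ᵥ 1) = 4 * transmissionOf G := by
  simp only [mulVec, dotProduct, Pi.one_apply, mul_one, one_mul, distSignlessLaplacian,
    sum_add_distrib, sum_ite_eq, mem_univ, if_true, transmission, transmissionOf, Nat.cast_sum]
  ring

end

/-- ρ_D(Gᶜ) ≥ 2(n-1) + 4m/n when the complement of G is connected. -/
theorem stmt_17 {V : Type*} [Fintype V] [DecidableEq V] (G : SimpleGraph V) [DecidableRel G.Adj]
    (hconn : Gᶜ.Connected) (ρ : ℝ) (hρ : IsDistSLSpectralRadius Gᶜ ρ) :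
    2 * ((Fintype.card V : ℝ) - 1) +
      4 * (G.edgeFinset.card : ℝ) / (Fintype.card V : ℝ) ≤ ρ := by
  have hn : (0 : ℝ) < Fintype.card V := by
    exact_mod_cast Fintype.card_pos_iff.mpr hconn.nonempty
  have hlower := card_mul_card_sub_one_div_two_add_card_edgeFinset_le_transmissionOf_compl G hconn
  have hupper := (distSignlessLaplacian_isHermitian Gᶜ).dotProduct_mulVec_le_mul_dotProduct hρ.2 1
  rw [one_dotProduct_distSignlessLaplacian_mulVec_one, one_dotProduct_one] at hupper
  rw [add_div' _ _ _ hn.ne', div_le_iff₀ hn]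
  linarith
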